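/- Let R be a commutative local noetherian ring with maximal ideal m and Λ a module-finite R-algebra. The map T ↦ T ∩ mod(Λ/mΛ) is a bijection from the set of torsion classes of fl Λ (the category of finite-length Λ-modules) to the set of torsion classes of mod(Λ/mΛ), with inverse T' ↦ T_Λ(T'), the smallest torsion class of fl Λ containing T'. -/

import Mathlib

universe u

open IsLocalRing

variable (R : Type u) [CommRing R] [IsNoetherianRing R] [IsLocalRing R]
variable (Λ : Type u) [Ring Λ] [Algebra R Λ] [Module.Finite R Λ]

/-- `X` is annihilated by `mΛ`, i.e. `X` is a module over `Λ/mΛ`. -/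
def AnnihilatedByM (X : ModuleCat.{u} Λ) : Prop :=
  ∀ r ∈ maximalIdeal R, ∀ x : X, (algebraMap R Λ r) • x = 0

/-- `T` is a torsion class of `fl Λ`, the category of finite length `Λ`-modules:
all members have finite length, and `T` is closed under factor modules and
extensions. -/
def IsTorsionClassFL (T : Set (ModuleCat.{u} Λ)) : Prop :=
  (∀ X ∈ T, IsFiniteLength Λ X) ∧
  (∀ X ∈ T, ∀ Y : ModuleCat.{u} Λ, ∀ p : X →ₗ[Λ] Y, Function.Surjective p → Y ∈ T) ∧
  (∀ X ∈ T, ∀ Z ∈ T, ∀ Y : ModuleCat.{u} Λ, ∀ (i : X →ₗ[Λ] Y) (p : Y →ₗ[Λ] Z),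
    Function.Injective i → Function.Surjective p →
    LinearMap.range i = LinearMap.ker p → Y ∈ T)

/-- `T` is a torsion class of `mod (Λ/mΛ)`, realized as the full subcategory of
finitely generated `Λ`-modules annihilated by `mΛ`: all members are finitely
generated and annihilated by `m`, and `T` is closed under factor modules and
extensions within this subcategory. -/
def IsTorsionClassModQuot (T : Set (ModuleCat.{u} Λ)) : Prop :=
  (∀ X ∈ T, Module.Finite Λ X ∧ AnnihilatedByM R Λ X) ∧
  (∀ X ∈ T, ∀ Y : ModuleCat.{u} Λ, ∀ p : X →ₗ[Λ] Y, Function.Surjective p → Y ∈ T) ∧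
  (∀ X ∈ T, ∀ Z ∈ T, ∀ Y : ModuleCat.{u} Λ, AnnihilatedByM R Λ Y →
    ∀ (i : X →ₗ[Λ] Y) (p : Y →ₗ[Λ] Z),
    Function.Injective i → Function.Surjective p →
    LinearMap.range i = LinearMap.ker p → Y ∈ T)

/-!
Intersection with `mod (Λ/mΛ)` is injective by induction on length. If `X` lies in a torsion
class `T` of `fl Λ`, then so does `mX`: it is the sum of the images of the maps `r • ·` for
`r ∈ m`, finitely many of which suffice since `X` is noetherian. By Nakayama `mX` is strictly
smaller than `X` unless `X = 0`, and `X / mX` lies in `T ∩ mod (Λ/mΛ)`; so `X` is an extension of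
objects of every torsion class with the same trace on `mod (Λ/mΛ)`.

For surjectivity, the finite length modules all of whose quotients in `mod (Λ/mΛ)` lie in `T'`
form a torsion class of `fl Λ` with trace `T'`. It is closed under extensions because a quotient
`W` of an extension `0 → X → Y → Z → 0` is an extension of a quotient of `Z` by the image of `X`.
-/
section

open Pointwise

variable {R Λ M : Type*} [CommRing R] [Ring Λ] [Algebra R Λ]
  [AddCommGroup M] [Module Λ M] [Module R M] [IsScalarTower R Λ M]

theorem Submodule.restrictScalars_ideal_set_smul (I : Ideal R) (N : Submodule Λ M) :
    ((I : Set R) • N).restrictScalars R = I • N.restrictScalars R := by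
  refine le_antisymm (fun x hx => ?_)
    (Submodule.smul_le.mpr fun r hr n hn => Submodule.mem_set_smul_of_mem_mem hr hn)
  induction x, hx using Submodule.set_smul_inductionOn with
  | smul₀ hr hn => exact Submodule.smul_mem_smul hr hn
  | smul₁ a _ ih =>
    refine Submodule.smul_induction_on (p := fun x => a • x ∈ _) ih (fun r hr n hn => ?_)
      fun x y hx hy => by rw [smul_add]; exact add_mem hx hy
    rw [smul_comm]
    exact Submodule.smul_mem_smul hr (N.smul_mem a hn)
  | add _ _ hx hy => exact add_mem hx hy
  | zero => exact zero_mem _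

theorem Submodule.eq_bot_of_le_maximalIdeal_set_smul [IsLocalRing R] [Module.Finite R Λ]
    {N : Submodule Λ M} (hN : N.FG) (h : N ≤ (maximalIdeal R : Set R) • N) : N = ⊥ := by
  rw [← Submodule.restrictScalars_eq_bot_iff R]
  refine Submodule.eq_bot_of_le_smul_of_le_jacobson_bot _ _ hN.restrictScalars ?_
    (jacobson_eq_maximalIdeal ⊥ bot_ne_top).ge
  rw [← restrictScalars_ideal_set_smul]
  exact h

theorem isFiniteLength_of_isTorsionBySet_maximalIdeal [IsLocalRing R] [Module.Finite R Λ]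
    [Module.Finite Λ M] (h : Module.IsTorsionBySet R M (maximalIdeal R)) :
    IsFiniteLength Λ M := by
  have : Module.Finite R M := .trans Λ M
  let := h.module
  let : Field (R ⧸ maximalIdeal R) := Ideal.Quotient.field _
  have : IsSemisimpleModule R M := h.isSemisimpleModule_iff.mp inferInstance
  exact isFiniteLength_iff_isNoetherian_isArtinian.mpr
    ⟨isNoetherian_of_tower R inferInstance, isArtinian_of_tower R inferInstance⟩

end

section

variable {Λ X Y Z : Type*} [Ring Λ] [AddCommGroup X] [Module Λ X] [AddCommGroup Y] [Module Λ Y]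
  [AddCommGroup Z] [Module Λ Z] {i : X →ₗ[Λ] Y} {p : Y →ₗ[Λ] Z}

theorem isFiniteLength_of_exact (hi : Function.Injective i) (hp : Function.Surjective p)
    (h : Function.Exact i p) (hX : IsFiniteLength Λ X) (hZ : IsFiniteLength Λ Z) :
    IsFiniteLength Λ Y := by
  rw [← Module.length_ne_top_iff] at hX hZ ⊢
  rw [Module.length_eq_add_of_exact i p hi hp h]
  exact WithTop.add_ne_top.mpr ⟨hX, hZ⟩

theorem Function.Exact.exists_surjective_quotient_range_comp {W : Type*} [AddCommGroup W]
    [Module Λ W] (h : Function.Exact i p) (hp : Function.Surjective p) {q : Y →ₗ[Λ] W}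
    (hq : Function.Surjective q) :
    ∃ f : Z →ₗ[Λ] W ⧸ LinearMap.range (q ∘ₗ i), Function.Surjective f := by
  set A := LinearMap.range (q ∘ₗ i)
  have hle : LinearMap.range i ≤ LinearMap.ker (A.mkQ ∘ₗ q) := by
    rw [LinearMap.range_le_ker_iff, LinearMap.comp_assoc, ← LinearMap.range_le_ker_iff,
      Submodule.ker_mkQ]
  refine ⟨(LinearMap.range i).liftQ _ hle ∘ₗ (h.linearEquivOfSurjective hp).symm.toLinearMap, ?_⟩
  rw [LinearMap.coe_comp, LinearEquiv.coe_coe]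
  refine .comp ?_ (LinearEquiv.surjective _)
  rw [← LinearMap.range_eq_top, Submodule.range_liftQ, LinearMap.range_eq_top]
  exact A.mkQ_surjective.comp hq

end

section TorsionClass

variable {R Λ : Type u} [CommRing R] [IsLocalRing R] [Ring Λ] [Algebra R Λ]

theorem AnnihilatedByM.of_surjective {X Y : ModuleCat.{u} Λ} (hX : AnnihilatedByM R Λ X)
    {p : X →ₗ[Λ] Y} (hp : Function.Surjective p) : AnnihilatedByM R Λ Y := by
  intro r hr y
  obtain ⟨x, rfl⟩ := hp y
  rw [← p.map_smul, hX r hr x, p.map_zero]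

theorem AnnihilatedByM.of_injective {X Y : ModuleCat.{u} Λ} (hY : AnnihilatedByM R Λ Y)
    {i : X →ₗ[Λ] Y} (hi : Function.Injective i) : AnnihilatedByM R Λ X :=
  fun r hr x => hi (by rw [i.map_smul, hY r hr, i.map_zero])

theorem annihilatedByM_of_subsingleton (X : ModuleCat.{u} Λ) [Subsingleton X] :
    AnnihilatedByM R Λ X :=
  fun _ _ _ => Subsingleton.elim _ _

open ModuleCat.Algebra Pointwise

theorem annihilatedByM_iff_isTorsionBySet (X : ModuleCat.{u} Λ) :
    AnnihilatedByM R Λ X ↔ Module.IsTorsionBySet R X (maximalIdeal R) :=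
  ⟨fun h x r => h r r.2 x, fun h r hr x => @h x ⟨r, hr⟩⟩

theorem annihilatedByM_quotient_maximalIdeal_smul (X : ModuleCat.{u} Λ) :
    AnnihilatedByM R Λ (.of Λ (X ⧸ (maximalIdeal R : Set R) • (⊤ : Submodule Λ X))) := by
  intro r hr y
  obtain ⟨x, rfl⟩ := Submodule.Quotient.mk_surjective _ y
  exact (Submodule.Quotient.mk_eq_zero _).mpr (Submodule.mem_set_smul_of_mem_mem hr trivial)

end TorsionClass

namespace IsTorsionClassFL

variable {Λ : Type u} [Ring Λ] {T : Set (ModuleCat.{u} Λ)}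

theorem mem_of_surjective (hT : IsTorsionClassFL Λ T) {X Y : ModuleCat.{u} Λ} (hX : X ∈ T)
    {p : X →ₗ[Λ] Y} (hp : Function.Surjective p) : Y ∈ T :=
  hT.2.1 X hX Y p hp

theorem mem_of_exact (hT : IsTorsionClassFL Λ T) {X Y Z : ModuleCat.{u} Λ} (hX : X ∈ T)
    (hZ : Z ∈ T) {i : X →ₗ[Λ] Y} {p : Y →ₗ[Λ] Z} (hi : Function.Injective i)
    (hp : Function.Surjective p) (h : LinearMap.range i = LinearMap.ker p) : Y ∈ T :=
  hT.2.2 X hX Z hZ Y i p hi hp h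

theorem sup_mem (hT : IsTorsionClassFL Λ T) {X : ModuleCat.{u} Λ} {P Q : Submodule Λ X}
    (hP : .of Λ P ∈ T) (hQ : .of Λ Q ∈ T) : .of Λ ↥(P ⊔ Q) ∈ T := by
  have hPQ : .of Λ (P × Q) ∈ T :=
    hT.mem_of_exact hP hQ (LinearMap.inl_injective (R := Λ)) (LinearMap.snd_surjective (R := Λ))
      (LinearMap.range_inl Λ P Q)
  rw [Submodule.sup_eq_range]
  exact hT.mem_of_surjective hPQ (LinearMap.surjective_rangeRestrict _)

theorem sSup_mem (hT : IsTorsionClassFL Λ T) {X : ModuleCat.{u} Λ} [IsNoetherian Λ X]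
    {S : Set (Submodule Λ X)} (hne : S.Nonempty) (hS : ∀ P ∈ S, .of Λ P ∈ T) :
    .of Λ ↥(sSup S) ∈ T := by
  obtain ⟨t, hts, hst⟩ := CompleteLattice.WellFoundedGT.isSupFiniteCompact _ S
  obtain ⟨P₀, hP₀⟩ := hne
  rw [hst]
  refine Finset.sup_induction (p := fun P : Submodule Λ X => .of Λ P ∈ T) ?_
    (fun _ hP _ hQ => hT.sup_mem hP hQ) fun P hP => hS P (hts hP)
  exact hT.mem_of_surjective (hS P₀ hP₀) (p := 0) fun y => ⟨0, Subsingleton.elim _ _⟩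

end IsTorsionClassFL

section Correspondence

variable {R Λ : Type u} [CommRing R] [IsLocalRing R] [Ring Λ] [Algebra R Λ]
  {T : Set (ModuleCat.{u} Λ)}

open ModuleCat.Algebra Pointwise

theorem IsTorsionClassFL.maximalIdeal_smul_top_mem (hT : IsTorsionClassFL Λ T)
    {X : ModuleCat.{u} Λ} (hX : X ∈ T) :
    .of Λ ↥((maximalIdeal R : Set R) • (⊤ : Submodule Λ X)) ∈ T := by
  have : IsNoetherian Λ X := (isFiniteLength_iff_isNoetherian_isArtinian.mp (hT.1 X hX)).1
  rw [Submodule.set_smul_eq_iSup, ← sSup_image]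
  refine hT.sSup_mem ⟨_, 0, zero_mem _, rfl⟩ ?_
  rintro _ ⟨a, -, rfl⟩
  beta_reduce
  rw [Submodule.pointwise_smul_def, Submodule.map_top]
  exact hT.mem_of_surjective hX (LinearMap.surjective_rangeRestrict _)

theorem IsTorsionClassFL.subset_of_inter_subset [Module.Finite R Λ]
    {T₁ T₂ : Set (ModuleCat.{u} Λ)}
    (h₁ : IsTorsionClassFL Λ T₁) (h₂ : IsTorsionClassFL Λ T₂)
    (h : T₁ ∩ {X | AnnihilatedByM R Λ X} ⊆ T₂) : T₁ ⊆ T₂ := by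
  intro X hX
  induction hn : Module.length Λ X using WellFoundedLT.induction generalizing X with
  | ind n ih =>
  obtain ⟨_, _⟩ := isFiniteLength_iff_isNoetherian_isArtinian.mp (h₁.1 X hX)
  set mX : Submodule Λ X := (maximalIdeal R : Set R) • ⊤
  by_cases htop : mX = ⊤
  · have htop_eq_bot : (⊤ : Submodule Λ X) = ⊥ :=
      Submodule.eq_bot_of_le_maximalIdeal_set_smul (IsNoetherian.noetherian ⊤) htop.ge
    have : Subsingleton X :=
      (Submodule.subsingleton_iff Λ).mp (subsingleton_iff_bot_eq_top.mp htop_eq_bot.symm)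
    exact h ⟨hX, annihilatedByM_of_subsingleton X⟩
  have hmX : ModuleCat.of Λ mX ∈ T₂ :=
    ih _ (hn ▸ Submodule.length_lt htop) (h₁.maximalIdeal_smul_top_mem hX) rfl
  have hquot : ModuleCat.of Λ (X ⧸ mX) ∈ T₂ :=
    h ⟨h₁.mem_of_surjective hX mX.mkQ_surjective, annihilatedByM_quotient_maximalIdeal_smul X⟩
  exact h₂.mem_of_exact hmX hquot mX.injective_subtype mX.mkQ_surjective
    (by rw [Submodule.range_subtype, Submodule.ker_mkQ])

theorem IsTorsionClassFL.isTorsionClassModQuot_inter (hT : IsTorsionClassFL Λ T) :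
    IsTorsionClassModQuot R Λ (T ∩ {X | AnnihilatedByM R Λ X}) := by
  refine ⟨fun X ⟨hXT, hX⟩ => ⟨?_, hX⟩, ?_, ?_⟩
  · have : IsNoetherian Λ X := (isFiniteLength_iff_isNoetherian_isArtinian.mp (hT.1 X hXT)).1
    infer_instance
  · rintro X ⟨hXT, hX⟩ Y p hp
    exact ⟨hT.mem_of_surjective hXT hp, hX.of_surjective hp⟩
  · rintro X ⟨hXT, -⟩ Z ⟨hZT, -⟩ Y hY i p hi hp h
    exact ⟨hT.mem_of_exact hXT hZT hi hp h, hY⟩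

variable (R) in
/-- The inverse of `T ↦ T ∩ mod (Λ/mΛ)`. -/
def torsionClassFLOf (T' : Set (ModuleCat.{u} Λ)) : Set (ModuleCat.{u} Λ) :=
  {X | IsFiniteLength Λ X ∧ ∀ Y : ModuleCat.{u} Λ, AnnihilatedByM R Λ Y →
    ∀ p : X →ₗ[Λ] Y, Function.Surjective p → Y ∈ T'}

variable {T' : Set (ModuleCat.{u} Λ)}

theorem IsTorsionClassModQuot.isTorsionClassFL_torsionClassFLOf
    (hT' : IsTorsionClassModQuot R Λ T') : IsTorsionClassFL Λ (torsionClassFLOf R T') := by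
  refine ⟨fun X hX => hX.1, ?_, ?_⟩
  · rintro X ⟨hXfl, hX⟩ Y p hp
    exact ⟨hXfl.of_surjective hp, fun W hW q hq => hX W hW (q ∘ₗ p) (hq.comp hp)⟩
  rintro X ⟨hXfl, hX⟩ Z ⟨hZfl, hZ⟩ Y i p hi hp h
  have hexact : Function.Exact i p := LinearMap.exact_iff.mpr h.symm
  refine ⟨isFiniteLength_of_exact hi hp hexact hXfl hZfl, fun W hW q hq => ?_⟩
  set A := LinearMap.range (q ∘ₗ i)
  obtain ⟨f, hf⟩ := hexact.exists_surjective_quotient_range_comp hp hq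
  have hA : ModuleCat.of Λ A ∈ T' :=
    hX _ (hW.of_injective A.injective_subtype) _ (LinearMap.surjective_rangeRestrict _)
  have hWA : ModuleCat.of Λ (W ⧸ A) ∈ T' := hZ _ (hW.of_surjective A.mkQ_surjective) f hf
  exact hT'.2.2 _ hA _ hWA W hW A.subtype A.mkQ A.injective_subtype A.mkQ_surjective
    (by rw [Submodule.range_subtype, Submodule.ker_mkQ])

theorem IsTorsionClassModQuot.torsionClassFLOf_inter [Module.Finite R Λ]
    (hT' : IsTorsionClassModQuot R Λ T') :
    torsionClassFLOf R T' ∩ {X | AnnihilatedByM R Λ X} = T' := by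
  refine Set.Subset.antisymm (fun X ⟨⟨_, hX⟩, hXann⟩ => hX X hXann LinearMap.id fun x => ⟨x, rfl⟩)
    fun X hX => ?_
  obtain ⟨_, hann⟩ := hT'.1 X hX
  refine ⟨⟨?_, fun Y _ p hp => hT'.2.1 X hX Y p hp⟩, hann⟩
  exact isFiniteLength_of_isTorsionBySet_maximalIdeal
    ((annihilatedByM_iff_isTorsionBySet X).mp hann)

end Correspondence

/-- **Torsion classes of finite length modules are controlled by `Λ/mΛ`.**
Let `R` be a commutative local noetherian ring with maximal ideal `m` and `Λ` a
module-finite `R`-algebra.  The map `T ↦ T ∩ mod(Λ/mΛ)` is a bijection from the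
set of torsion classes of `fl Λ` onto the set of torsion classes of `mod(Λ/mΛ)`
(the inverse being `T' ↦ T_Λ(T')`, the smallest torsion class containing `T'`). -/
theorem torsionClassFL_equiv_torsionClassModQuot :
    Set.BijOn (fun T : Set (ModuleCat.{u} Λ) => T ∩ {X | AnnihilatedByM R Λ X})
      {T | IsTorsionClassFL Λ T} {T | IsTorsionClassModQuot R Λ T} := by
  refine ⟨fun T hT => IsTorsionClassFL.isTorsionClassModQuot_inter hT, fun T₁ h₁ T₂ h₂ heq => ?_,
    fun T' hT' => ⟨torsionClassFLOf R T', hT'.isTorsionClassFL_torsionClassFLOf,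
      hT'.torsionClassFLOf_inter⟩⟩
  have heq : T₁ ∩ {X | AnnihilatedByM R Λ X} = T₂ ∩ {X | AnnihilatedByM R Λ X} := heq
  exact (h₁.subset_of_inter_subset h₂ (heq.le.trans Set.inter_subset_left)).antisymm
    (h₂.subset_of_inter_subset h₁ (heq.ge.trans Set.inter_subset_left))
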